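/- arXiv:1409.7673 — 2 statements merged into one kernel-verified Lean document; each statement's English description precedes it below -/
import Mathlib

section
/- Fix an integer p ≥ 3, set λ = 2cos(π/p), and let k be a positive integer. Let Q₀ = [A₀,B₀,C₀] be a hyperbolic λ-BQF (so Q₀ = [c, d−a, −b] for some M = [[a,b],[c,d]] in G_p with a+d > 2) with positive discriminant. Let S₊ denote the set of G_p-simple forms in the G_p-orbit of Q₀ and S₋ the set of G_p-simple forms in the G_p-orbit of −Q₀, and assume S₊ and S₋ are finite and nonempty. Then the rational function q(z) = Σ_{Q ∈ S₊} Q(z,1)^{−k} − (−1)^k Σ_{Q ∈ S₋} Q(z,1)^{−k} satisfies q + q|T = 0 and q + q|U + q|U² + ⋯ + q|U^{p−1} = 0 (at every z ∈ ℂ where all terms are defined); that is, q is a rational period function of weight 2k on G_p. -/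
open Matrix

noncomputable section

abbrev SL2R := Matrix.SpecialLinearGroup (Fin 2) ℝ

/-- The translation generator `S = [[1, λ],[0,1]]` of the Hecke group. -/
def Smat (l : ℝ) : SL2R := ⟨!![1, l; 0, 1], by norm_num [Matrix.det_fin_two_of]⟩

/-- The inversion generator `T = [[0,-1],[1,0]]`. -/
def Tmat : SL2R := ⟨!![0, -1; 1, 0], by norm_num [Matrix.det_fin_two_of]⟩

/-- `U = S * T = [[λ,-1],[1,0]]`. -/
def Umat (l : ℝ) : SL2R := Smat l * Tmat

/-- The Hecke group `G_p`, the subgroup of `SL(2,ℝ)` generated by `S` and `T`. -/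
def HeckeGroup (l : ℝ) : Subgroup SL2R := Subgroup.closure {Smat l, Tmat}

/-- Möbius action of a matrix on ℂ. -/
def mobius (M : SL2R) (z : ℂ) : ℂ :=
  ((M.1 0 0 : ℝ) * z + (M.1 0 1 : ℝ)) / ((M.1 1 0 : ℝ) * z + (M.1 1 1 : ℝ))

/-- The automorphy denominator `cz + d`. -/
def denom (M : SL2R) (z : ℂ) : ℂ := (M.1 1 0 : ℝ) * z + (M.1 1 1 : ℝ)

/-- Weight `2k` slash operator: `(f|M)(z) = (cz+d)^{-2k} f(Mz)`. -/
def slash (k : ℕ) (M : SL2R) (f : ℂ → ℂ) (z : ℂ) : ℂ :=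
  (denom M z) ^ (-(2 * (k : ℤ))) * f (mobius M z)

/-- The value `Q(z,1) = A z² + B z + C` of the binary quadratic form `Q = [A,B,C]`. -/
def formVal (Q : ℝ × ℝ × ℝ) (z : ℂ) : ℂ :=
  (Q.1 : ℂ) * z ^ 2 + (Q.2.1 : ℂ) * z + (Q.2.2 : ℂ)

/-- Discriminant `B² - 4AC` of the form `[A,B,C]`. -/
def disc (Q : ℝ × ℝ × ℝ) : ℝ := Q.2.1 ^ 2 - 4 * Q.1 * Q.2.2

/-- Action of `M = [[a,b],[c,d]]` on the form `[A,B,C]`: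
`(Q∘M)(x,y) = Q(ax+by, cx+dy)`. -/
def formAct (Q : ℝ × ℝ × ℝ) (M : SL2R) : ℝ × ℝ × ℝ :=
  (Q.1 * (M.1 0 0) ^ 2 + Q.2.1 * (M.1 0 0) * (M.1 1 0) + Q.2.2 * (M.1 1 0) ^ 2,
   2 * Q.1 * (M.1 0 0) * (M.1 0 1) + Q.2.1 * ((M.1 0 0) * (M.1 1 1) + (M.1 0 1) * (M.1 1 0))
     + 2 * Q.2.2 * (M.1 1 0) * (M.1 1 1),
   Q.1 * (M.1 0 1) ^ 2 + Q.2.1 * (M.1 0 1) * (M.1 1 1) + Q.2.2 * (M.1 1 1) ^ 2)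

/-- The `G_p`-orbit of a form. -/
def formOrbit (l : ℝ) (Q : ℝ × ℝ × ℝ) : Set (ℝ × ℝ × ℝ) :=
  {Q' | ∃ M ∈ HeckeGroup l, Q' = formAct Q M}

/-- A form `[A,B,C]` is `G_p`-simple if `A > 0 > C`. -/
def IsSimple (Q : ℝ × ℝ × ℝ) : Prop := 0 < Q.1 ∧ Q.2.2 < 0

/-- A form is hyperbolic if it equals `[c, d-a, -b]` for some `M = [[a,b],[c,d]]` in the
Hecke group with `a + d > 2`. -/
def IsHyperbolicForm (l : ℝ) (Q : ℝ × ℝ × ℝ) : Prop :=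
  ∃ M ∈ HeckeGroup l, 2 < M.1 0 0 + M.1 1 1 ∧
    Q = (M.1 1 0, M.1 1 1 - M.1 0 0, -(M.1 0 1))

/-!
Write `q` as `∑ sgn(A) · R(z,1)^{-k}` over the forms `R = [A,B,C]` of the orbit of `Q₀` with
`AC < 0` (`signedSum`); slashing by `M` replaces each `R` by `R ∘ M`. Since `R ∘ T = [C,-B,A]`,
`T` exchanges the forms with `A > 0` and those with `A < 0`, so `q|T = -q`. Since `U^p = -1`
acts trivially on forms and `C(R ∘ U^{-t}) = A(R ∘ U^{-t-1})`, the coefficient of `R` in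
`∑_{t<p} q|U^t` is the number of sign changes `+ → -` minus the number of sign changes `- → +`
in the cyclic sequence `A(R ∘ U^{-t})`, hence `0`, provided this sequence never vanishes.

That no form in the orbit of a hyperbolic form has `A = 0` is where the Hecke group enters:
otherwise a conjugate of the hyperbolic element would be upper triangular with trace `> 2`,
whereas conjugating an upper triangular element of `G_p` with diagonal `α, α⁻¹`, `α² ≠ 1`, into
`S` gives a translation by some `0 < μ < λ`, which the ping-pong argument on alternating words
in `T` and `U^a`, `0 < a < p`, excludes.
-/

open Finset Real

section Generators

variable {l : ℝ}

lemma Smat_mem : Smat l ∈ HeckeGroup l := Subgroup.subset_closure (Set.mem_insert _ _)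

lemma Tmat_mem : Tmat ∈ HeckeGroup l := Subgroup.subset_closure (Set.mem_insert_of_mem _ rfl)

lemma Umat_mem : Umat l ∈ HeckeGroup l := mul_mem Smat_mem Tmat_mem

lemma coe_Umat : (Umat l).1 = !![l, -1; 1, 0] := by
  rw [Umat, Matrix.SpecialLinearGroup.coe_mul]
  simp [Smat, Tmat]

end Generators

section FormAction

lemma formAct_mul (Q : ℝ × ℝ × ℝ) (M N : SL2R) :
    formAct Q (M * N) = formAct (formAct Q M) N := by
  simp only [formAct, Matrix.SpecialLinearGroup.coe_mul, Matrix.mul_apply, Fin.sum_univ_two,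
    Prod.mk.injEq]
  exact ⟨by ring, by ring, by ring⟩

lemma formAct_one (Q : ℝ × ℝ × ℝ) : formAct Q 1 = Q := by
  simp [formAct]

lemma formAct_formAct_inv (Q : ℝ × ℝ × ℝ) (M : SL2R) : formAct (formAct Q M) M⁻¹ = Q := by
  rw [← formAct_mul, mul_inv_cancel, formAct_one]

lemma formAct_neg (Q : ℝ × ℝ × ℝ) (M : SL2R) : formAct (-Q) M = -formAct Q M := by
  simp only [formAct, Prod.fst_neg, Prod.snd_neg, Prod.neg_mk, Prod.mk.injEq]
  exact ⟨by ring, by ring, by ring⟩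

lemma formAct_of_coe_eq_neg_one (Q : ℝ × ℝ × ℝ) {M : SL2R} (hM : M.1 = -1) :
    formAct Q M = Q := by
  simp [formAct, hM]

lemma formAct_Tmat (Q : ℝ × ℝ × ℝ) : formAct Q Tmat = (Q.2.2, -Q.2.1, Q.1) := by
  simp [formAct, Tmat]

lemma formAct_Umat_snd_snd (l : ℝ) (Q : ℝ × ℝ × ℝ) : (formAct Q (Umat l)).2.2 = Q.1 := by
  simp [formAct, coe_Umat]

end FormAction

section Orbit

variable {l : ℝ} {P R : ℝ × ℝ × ℝ} {M : SL2R}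

lemma formAct_mem_formOrbit (hR : R ∈ formOrbit l P) (hM : M ∈ HeckeGroup l) :
    formAct R M ∈ formOrbit l P := by
  obtain ⟨N, hN, rfl⟩ := hR
  exact ⟨N * M, mul_mem hN hM, (formAct_mul _ _ _).symm⟩

lemma formAct_mem_formOrbit_iff (hM : M ∈ HeckeGroup l) :
    formAct R M ∈ formOrbit l P ↔ R ∈ formOrbit l P :=
  ⟨fun h => formAct_formAct_inv R M ▸ formAct_mem_formOrbit h (inv_mem hM),
    fun h => formAct_mem_formOrbit h hM⟩

lemma neg_mem_formOrbit_neg_iff : -R ∈ formOrbit l (-P) ↔ R ∈ formOrbit l P := by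
  simp only [formOrbit, Set.mem_ofPred_eq, formAct_neg, neg_inj]

end Orbit

section Slash

lemma formVal_neg (Q : ℝ × ℝ × ℝ) (z : ℂ) : formVal (-Q) z = -formVal Q z := by
  simp only [formVal, Prod.fst_neg, Prod.snd_neg, Complex.ofReal_neg]
  ring

lemma formVal_formAct (Q : ℝ × ℝ × ℝ) {M : SL2R} {z : ℂ} (hz : denom M z ≠ 0) :
    formVal (formAct Q M) z = denom M z ^ 2 * formVal Q (mobius M z) := by
  unfold denom at hz
  simp only [formVal, formAct, mobius, denom]
  push_cast
  field_simp
  ring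

lemma zpow_formVal_formAct (k : ℕ) (Q : ℝ × ℝ × ℝ) {M : SL2R} {z : ℂ} (hz : denom M z ≠ 0) :
    formVal (formAct Q M) z ^ (-(k : ℤ)) =
      denom M z ^ (-(2 * (k : ℤ))) * formVal Q (mobius M z) ^ (-(k : ℤ)) := by
  rw [formVal_formAct Q hz, mul_zpow, ← zpow_natCast, ← _root_.zpow_mul]
  ring_nf

end Slash

/-- For `G Q = Q(z,1)^{-k}` this is `q(z)`, as `(-Q)(z,1)^{-k} = (-1)^k Q(z,1)^{-k}`. -/
def signedSum {M : Type*} [AddCommGroup M] (Splus Sminus : Finset (ℝ × ℝ × ℝ))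
    (G : ℝ × ℝ × ℝ → M) : M :=
  ∑ Q ∈ Splus, G Q - ∑ Q ∈ Sminus, G (-Q)

section SignedSum

variable (Splus Sminus : Finset (ℝ × ℝ × ℝ))

lemma signedSum_formVal_zpow (k : ℕ) (z : ℂ) :
    signedSum Splus Sminus (fun Q => formVal Q z ^ (-(k : ℤ))) =
      ∑ Q ∈ Splus, formVal Q z ^ (-(k : ℤ)) -
        (-1) ^ k * ∑ Q ∈ Sminus, formVal Q z ^ (-(k : ℤ)) := by
  have hneg (Q : ℝ × ℝ × ℝ) :
      formVal (-Q) z ^ (-(k : ℤ)) = (-1) ^ k * formVal Q z ^ (-(k : ℤ)) := by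
    rw [formVal_neg, neg_eq_neg_one_mul, mul_zpow, _root_.zpow_neg, zpow_natCast, ← inv_pow,
      inv_neg_one]
  simp only [signedSum, hneg, Finset.mul_sum]

lemma slash_signedSum_formVal_zpow (k : ℕ) {M : SL2R} {z : ℂ} (hz : denom M z ≠ 0) :
    slash k M (fun w => signedSum Splus Sminus (fun Q => formVal Q w ^ (-(k : ℤ)))) z =
      signedSum Splus Sminus (fun Q => formVal (formAct Q M) z ^ (-(k : ℤ))) := by
  simp only [slash, signedSum, mul_sub, Finset.mul_sum, zpow_formVal_formAct k _ hz]

end SignedSum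

section PowersOfU

variable {p : ℕ} {l : ℝ}

lemma heckeLambda_pos (hp : 3 ≤ p) (hl : l = 2 * cos (π / p)) : 0 < l := by
  have hp' : (3 : ℝ) ≤ p := by exact_mod_cast hp
  have hlt : π / p < π / 2 := div_lt_div_of_pos_left pi_pos (by norm_num) (by linarith)
  rw [hl]
  have := cos_pos_of_mem_Ioo ⟨by linarith [div_pos pi_pos (by linarith : (0 : ℝ) < p)], hlt⟩
  linarith

def heckeSin (p : ℕ) (x : ℝ) : ℝ := sin (x * (π / p))

lemma heckeSin_add_one (hl : l = 2 * cos (π / p)) (x : ℝ) :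
    heckeSin p (x + 1) = l * heckeSin p x - heckeSin p (x - 1) := by
  simp only [heckeSin, add_mul, sub_mul, one_mul, sin_add, sin_sub, hl]
  ring

lemma heckeSin_pos (hp : 3 ≤ p) {x : ℝ} (hx : 0 < x) (hxp : x < p) : 0 < heckeSin p x := by
  have hp0 : (0 : ℝ) < p := by positivity
  refine sin_pos_of_pos_of_lt_pi (by positivity) ?_
  calc x * (π / p) < p * (π / p) := by gcongr
    _ = π := by field_simp

lemma heckeSin_nonneg (hp : 3 ≤ p) {x : ℝ} (hx : 0 ≤ x) (hxp : x ≤ p) : 0 ≤ heckeSin p x := by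
  have hp0 : (0 : ℝ) < p := by positivity
  refine sin_nonneg_of_nonneg_of_le_pi (by positivity) ?_
  calc x * (π / p) ≤ p * (π / p) := by gcongr
    _ = π := by field_simp

lemma coe_Umat_pow (hp : 3 ≤ p) (hl : l = 2 * cos (π / p)) (t : ℕ) :
    (Umat l ^ t).1 = (heckeSin p 1)⁻¹ •
      !![heckeSin p (t + 1), -heckeSin p t; heckeSin p t, -heckeSin p (t - 1)] := by
  have hs1 : heckeSin p 1 ≠ 0 := (heckeSin_pos hp one_pos (by norm_cast; omega)).ne'
  induction t with
  | zero =>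
    have h0 : heckeSin p 0 = 0 := by simp [heckeSin]
    have hm1 : heckeSin p (0 - 1) = -heckeSin p 1 := by simp [heckeSin, neg_mul]
    rw [pow_zero]
    push_cast
    rw [zero_add, h0, hm1]
    ext i j
    fin_cases i <;> fin_cases j <;> simp [hs1]
  | succ n ih =>
    rw [pow_succ', Matrix.SpecialLinearGroup.coe_mul, ih, coe_Umat, Matrix.mul_smul]
    congr 1
    have h1 := heckeSin_add_one (p := p) hl (n + 1)
    rw [add_sub_cancel_right] at h1
    have h2 := heckeSin_add_one (p := p) hl n
    push_cast
    ext i j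
    fin_cases i <;> fin_cases j <;> simp [Matrix.mul_apply, Fin.sum_univ_two] <;> linarith

lemma Umat_pow_p (hp : 3 ≤ p) (hl : l = 2 * cos (π / p)) : Umat l ^ p = -1 := by
  have hs1 : heckeSin p 1 ≠ 0 := (heckeSin_pos hp one_pos (by norm_cast; omega)).ne'
  have hπ : (p : ℝ) * (π / p) = π := by field_simp
  have h0 : heckeSin p p = 0 := by rw [heckeSin, hπ, sin_pi]
  have h1 : heckeSin p (p + 1) = -heckeSin p 1 := by
    rw [heckeSin, heckeSin, add_mul, hπ, one_mul, add_comm, sin_add_pi]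
  have h2 : heckeSin p (p - 1) = heckeSin p 1 := by
    rw [heckeSin, heckeSin, sub_mul, hπ, one_mul, sin_pi_sub]
  ext i j
  rw [coe_Umat_pow hp hl, Matrix.SpecialLinearGroup.coe_neg, h0, h1, h2]
  fin_cases i <;> fin_cases j <;> simp [hs1]

lemma Umat_pow_mulVec_pos (hp : 3 ≤ p) (hl : l = 2 * cos (π / p)) {a : ℕ} (ha : 0 < a)
    (hap : a < p) {v : Fin 2 → ℝ} (hv : v 0 * v 1 < 0) :
    0 < ((Umat l ^ a).1 *ᵥ v) 0 * ((Umat l ^ a).1 *ᵥ v) 1 := by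
  have ha' : (1 : ℝ) ≤ a := by exact_mod_cast ha
  have hap' : (a : ℝ) + 1 ≤ p := by exact_mod_cast hap
  have hs1 := heckeSin_pos hp one_pos (by linarith)
  have hsa := heckeSin_pos hp (by linarith) (by linarith : (a : ℝ) < p)
  have hsa1 := heckeSin_nonneg hp (by linarith : (0 : ℝ) ≤ a + 1) hap'
  have hsam := heckeSin_nonneg hp (by linarith : (0 : ℝ) ≤ a - 1) (by linarith)
  have hmul : ∀ i, ((Umat l ^ a).1 *ᵥ v) i = (heckeSin p 1)⁻¹ *
      (!![heckeSin p (a + 1), -heckeSin p a; heckeSin p a, -heckeSin p (a - 1)] *ᵥ v) i := by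
    intro i
    rw [coe_Umat_pow hp hl, Matrix.smul_mulVec, Pi.smul_apply, smul_eq_mul]
  rw [hmul, hmul, mul_mul_mul_comm, ← sq]
  simp only [Matrix.mulVec, dotProduct, Fin.sum_univ_two, Matrix.of_apply, Matrix.cons_val',
    Matrix.cons_val_zero, Matrix.cons_val_one, Matrix.empty_val', Matrix.cons_val_fin_one]
  refine mul_pos (by positivity) ?_
  rcases mul_neg_iff.mp hv with ⟨h0, h1⟩ | ⟨h0, h1⟩
  · exact mul_pos (by nlinarith) (by nlinarith)
  · exact mul_pos_of_neg_of_neg (by nlinarith) (by nlinarith)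

lemma Umat_mulVec_sub (l : ℝ) (v : Fin 2 → ℝ) :
    ((Umat l).1 *ᵥ v) 0 - l * ((Umat l).1 *ᵥ v) 1 = -v 1 := by
  simp [coe_Umat, Matrix.mulVec, dotProduct, Fin.sum_univ_two]

end PowersOfU

section Words

variable {p : ℕ} {l : ℝ}

def letter (l : ℝ) (x : ℕ) : SL2R := if x = 0 then Tmat else Umat l ^ x

/-- `x` and `z` are the first and the last letter of the word `g`. -/
inductive IsAltWord (p : ℕ) (l : ℝ) : ℕ → ℕ → SL2R → Prop
  | single {x : ℕ} : x < p → IsAltWord p l x x (letter l x)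
  | cons {x y z : ℕ} {g : SL2R} : x < p → (x = 0 ↔ y ≠ 0) → IsAltWord p l y z g →
      IsAltWord p l x z (letter l x * g)

def IsAltTail (p : ℕ) (l : ℝ) (y : ℕ) (g : SL2R) : Prop :=
  g = 1 ∨ ∃ x z, (y = 0 ↔ x ≠ 0) ∧ IsAltWord p l x z g

def IsAltWordUpToSign (p : ℕ) (l : ℝ) (g : SL2R) : Prop :=
  ∃ h, (h = 1 ∨ ∃ x z, IsAltWord p l x z h) ∧ (g = h ∨ g = -h)

lemma IsAltWord.lt {x z : ℕ} {g : SL2R} (hw : IsAltWord p l x z g) : x < p := by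
  cases hw with
  | single hx => exact hx
  | cons hx _ _ => exact hx

lemma IsAltWord.exists_tail {y z : ℕ} {g : SL2R} (hw : IsAltWord p l y z g) :
    ∃ h, IsAltTail p l y h ∧ g = letter l y * h := by
  cases hw with
  | single _ => exact ⟨1, Or.inl rfl, (mul_one _).symm⟩
  | cons _ hxy hg => exact ⟨_, Or.inr ⟨_, _, hxy, hg⟩, rfl⟩

lemma IsAltTail.exists_isAltWord {y : ℕ} {h : SL2R} (hy : y < p) (ht : IsAltTail p l y h) :
    ∃ z, IsAltWord p l y z (letter l y * h) := by
  rcases ht with rfl | ⟨x, z, hyx, hw⟩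
  · exact ⟨y, by rw [mul_one]; exact .single hy⟩
  · exact ⟨z, .cons hy hyx hw⟩

lemma IsAltTail.of_ne_zero {y c : ℕ} {h : SL2R} (hy : y ≠ 0) (hc : c ≠ 0)
    (ht : IsAltTail p l y h) : IsAltTail p l c h := by
  simpa only [IsAltTail, hy, hc, false_iff, not_not] using ht

lemma IsAltTail.isAltWordUpToSign {y : ℕ} {h : SL2R} (ht : IsAltTail p l y h) :
    IsAltWordUpToSign p l h :=
  ⟨h, ht.imp_right fun ⟨x, z, _, hw⟩ => ⟨x, z, hw⟩, Or.inl rfl⟩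

lemma IsAltWordUpToSign.neg {g : SL2R} (hg : IsAltWordUpToSign p l g) :
    IsAltWordUpToSign p l (-g) := by
  obtain ⟨h, hh, rfl | rfl⟩ := hg
  · exact ⟨_, hh, Or.inr rfl⟩
  · exact ⟨_, hh, Or.inl (neg_neg _)⟩

lemma Tmat_mul_Tmat : Tmat * Tmat = -1 := by
  ext i j
  rw [Matrix.SpecialLinearGroup.coe_mul, Matrix.SpecialLinearGroup.coe_neg,
    Matrix.SpecialLinearGroup.coe_one]
  fin_cases i <;> fin_cases j <;> simp [Tmat]

lemma Tmat_inv : Tmat⁻¹ = -Tmat :=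
  inv_eq_of_mul_eq_one_right (by rw [mul_neg, Tmat_mul_Tmat, neg_neg])

lemma Smat_eq_neg_mul : Smat l = -(Umat l * Tmat) := by
  rw [Umat, mul_assoc, Tmat_mul_Tmat, mul_neg_one, neg_neg]

lemma Smat_inv_eq_neg_mul (hp : 3 ≤ p) (hl : l = 2 * cos (π / p)) :
    (Smat l)⁻¹ = -(Tmat * Umat l ^ (p - 1)) := by
  refine inv_eq_of_mul_eq_one_right ?_
  rw [Smat_eq_neg_mul, neg_mul_neg, mul_assoc, ← mul_assoc Tmat, Tmat_mul_Tmat, neg_one_mul,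
    mul_neg, ← pow_succ', Nat.sub_add_cancel (by omega), Umat_pow_p hp hl, neg_neg]

lemma isAltWordUpToSign_Umat_pow_mul (hp : 3 ≤ p) (hl : l = 2 * cos (π / p))
    {c y : ℕ} {h : SL2R} (hc : 0 < c) (hc2 : c < 2 * p) (hy : y ≠ 0) (ht : IsAltTail p l y h) :
    IsAltWordUpToSign p l (Umat l ^ c * h) := by
  rcases lt_trichotomy c p with hcp | rfl | hcp
  · obtain ⟨z, hw⟩ := (ht.of_ne_zero hy hc.ne').exists_isAltWord hcp
    rw [letter, if_neg hc.ne'] at hw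
    exact ⟨_, Or.inr ⟨c, z, hw⟩, Or.inl rfl⟩
  · rw [Umat_pow_p hp hl, neg_one_mul]
    exact ht.isAltWordUpToSign.neg
  · obtain ⟨z, hw⟩ := (ht.of_ne_zero hy (by omega : c - p ≠ 0)).exists_isAltWord (by omega)
    rw [letter, if_neg (by omega)] at hw
    rw [← Nat.add_sub_cancel' hcp.le, pow_add, Umat_pow_p hp hl, neg_one_mul, neg_mul]
    exact IsAltWordUpToSign.neg ⟨_, Or.inr ⟨_, z, hw⟩, Or.inl rfl⟩

lemma IsAltWordUpToSign.letter_mul (hp : 3 ≤ p) (hl : l = 2 * cos (π / p))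
    {x : ℕ} {g : SL2R} (hx : x < p) (hg : IsAltWordUpToSign p l g) :
    IsAltWordUpToSign p l (letter l x * g) := by
  obtain ⟨h, hh, hgh⟩ := hg
  suffices IsAltWordUpToSign p l (letter l x * h) by
    rcases hgh with rfl | rfl
    · exact this
    · exact mul_neg (letter l x) h ▸ this.neg
  rcases hh with rfl | ⟨y, z, hw⟩
  · exact ⟨_, Or.inr ⟨x, x, by rw [mul_one]; exact .single hx⟩, Or.inl rfl⟩
  by_cases hxy : x = 0 ↔ y ≠ 0
  · exact ⟨_, Or.inr ⟨x, z, .cons hx hxy hw⟩, Or.inl rfl⟩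
  obtain ⟨h', ht, rfl⟩ := hw.exists_tail
  obtain rfl | hx0 := eq_or_ne x 0
  · obtain rfl : y = 0 := by tauto
    rw [← mul_assoc, letter, if_pos rfl, Tmat_mul_Tmat, neg_one_mul]
    exact ht.isAltWordUpToSign.neg
  · have hy0 : y ≠ 0 := by tauto
    rw [← mul_assoc, letter, letter, if_neg hx0, if_neg hy0, ← pow_add]
    exact isAltWordUpToSign_Umat_pow_mul hp hl (by omega) (by have := hw.lt; omega) hy0 ht

lemma isAltWordUpToSign_of_mem (hp : 3 ≤ p) (hl : l = 2 * cos (π / p)) {g : SL2R}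
    (hg : g ∈ HeckeGroup l) : IsAltWordUpToSign p l g := by
  have hT {g} (hg : IsAltWordUpToSign p l g) : IsAltWordUpToSign p l (Tmat * g) := by
    simpa only [letter, if_pos] using hg.letter_mul hp hl (x := 0) (by omega)
  have hU {g} (hg : IsAltWordUpToSign p l g) {x : ℕ} (hx : 0 < x) (hxp : x < p) :
      IsAltWordUpToSign p l (Umat l ^ x * g) := by
    simpa only [letter, if_neg hx.ne'] using hg.letter_mul hp hl hxp
  induction hg using Subgroup.closure_induction_left with
  | one => exact ⟨1, Or.inl rfl, Or.inl rfl⟩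
  | mul_left x hx y _ ih =>
    rcases hx with rfl | rfl
    · rw [Smat_eq_neg_mul, neg_mul, mul_assoc, ← pow_one (Umat l)]
      exact (hU (hT ih) one_pos (by omega)).neg
    · exact hT ih
  | inv_mul_cancel x hx y _ ih =>
    rcases hx with rfl | rfl
    · rw [Smat_inv_eq_neg_mul hp hl, neg_mul, mul_assoc]
      exact (hT (hU ih (by omega) (by omega))).neg
    · rw [Tmat_inv, neg_mul]
      exact (hT ih).neg

end Words

section PingPong

variable {p : ℕ} {l : ℝ}

/-- The ping-pong sets: the letter `x` maps `inRegion x` into `outRegion l x`, and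
`outRegion l y ⊆ inRegion x` whenever `y` may follow `x` in an alternating word. -/
def inRegion (x : ℕ) (v : Fin 2 → ℝ) : Prop :=
  if x = 0 then 0 < v 0 * v 1 else v 0 * v 1 < 0

def outRegion (l : ℝ) (x : ℕ) (v : Fin 2 → ℝ) : Prop :=
  if x = 0 then v 0 * v 1 < 0 else 0 < v 0 * v 1 ∧ v 0 ≠ l * v 1

lemma inRegion_of_outRegion {x y : ℕ} {v : Fin 2 → ℝ} (hxy : x = 0 ↔ y ≠ 0)
    (hv : outRegion l y v) : inRegion x v := by
  by_cases hx : x = 0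
  · simp only [inRegion, outRegion, hx, hxy.mp hx, if_true, if_false] at hv ⊢
    exact hv.1
  · have hy : y = 0 := by tauto
    simpa only [inRegion, outRegion, hx, hy, if_true, if_false] using hv

lemma letter_mulVec_outRegion (hp : 3 ≤ p) (hl : l = 2 * cos (π / p)) {x : ℕ}
    (hx : x < p) {v : Fin 2 → ℝ} (hv : inRegion x v) : outRegion l x ((letter l x).1 *ᵥ v) := by
  rcases Nat.eq_zero_or_pos x with rfl | hx0
  · simp only [letter, outRegion, inRegion, if_pos] at hv ⊢
    simp only [Tmat, Matrix.mulVec, dotProduct, Fin.sum_univ_two, Matrix.of_apply,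
      Matrix.cons_val', Matrix.cons_val_zero, Matrix.cons_val_one, Matrix.empty_val',
      Matrix.cons_val_fin_one]
    nlinarith
  simp only [letter, outRegion, inRegion, if_neg hx0.ne'] at hv ⊢
  refine ⟨Umat_pow_mulVec_pos hp hl hx0 hx hv, sub_ne_zero.mp ?_⟩
  have hsplit : (Umat l ^ x).1 *ᵥ v = (Umat l).1 *ᵥ ((Umat l ^ (x - 1)).1 *ᵥ v) := by
    rw [Matrix.mulVec_mulVec, ← Matrix.SpecialLinearGroup.coe_mul, ← pow_succ',
      Nat.sub_add_cancel hx0]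
  rw [hsplit, Umat_mulVec_sub, neg_ne_zero]
  rcases Nat.eq_zero_or_pos (x - 1) with hx1 | hx1
  · rw [hx1, pow_zero, Matrix.SpecialLinearGroup.coe_one, Matrix.one_mulVec]
    exact right_ne_zero_of_mul hv.ne
  · exact right_ne_zero_of_mul (Umat_pow_mulVec_pos hp hl hx1 (by omega) hv).ne'

lemma IsAltWord.mulVec_outRegion (hp : 3 ≤ p) (hl : l = 2 * cos (π / p))
    {x z : ℕ} {g : SL2R} (hw : IsAltWord p l x z g) {v : Fin 2 → ℝ} (hv : inRegion z v) :
    outRegion l x (g.1 *ᵥ v) := by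
  induction hw with
  | single hx => exact letter_mulVec_outRegion hp hl hx hv
  | cons hx hxy _ ih =>
    rw [Matrix.SpecialLinearGroup.coe_mul, ← Matrix.mulVec_mulVec]
    exact letter_mulVec_outRegion hp hl hx (inRegion_of_outRegion hxy (ih hv))

lemma outRegion_neg {x : ℕ} {v : Fin 2 → ℝ} (hv : outRegion l x (-v)) : outRegion l x v := by
  simpa only [outRegion, Pi.neg_apply, neg_mul, mul_neg, neg_neg, ne_eq, neg_inj] using hv

lemma not_outRegion (hl0 : 0 ≤ l) {x : ℕ} {v : Fin 2 → ℝ} (hv : v 0 * (v 0 - l * v 1) = 0) :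
    ¬ outRegion l x v := by
  rcases mul_eq_zero.mp hv with h | h
  · unfold outRegion
    split_ifs <;> simp [h]
  · rw [sub_eq_zero] at h
    unfold outRegion
    split_ifs
    · rw [h]
      nlinarith [mul_nonneg hl0 (sq_nonneg (v 1))]
    · simp [h]

end PingPong

section Rigidity

variable {p : ℕ} {l : ℝ}

/-- A translation by `0 < μ < λ` in `G_p` would be `±` an alternating word, mapping
`inRegion z` into `outRegion l x`; but it moves a vector of `inRegion z` onto the slope `0` or
`λ`, which `outRegion l x` avoids. -/
lemma coe_ne_translation (hp : 3 ≤ p) (hl : l = 2 * cos (π / p)) {μ : ℝ}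
    (hμ : 0 < μ) (hμl : μ < l) {g : SL2R} (hg : g ∈ HeckeGroup l) :
    g.1 ≠ !![1, μ; 0, 1] := by
  intro hgμ
  obtain ⟨h, hh, hgh⟩ := isAltWordUpToSign_of_mem hp hl hg
  rcases hh with rfl | ⟨x, z, hw⟩
  · have h01 := congrFun (congrFun hgμ 0) 1
    rcases hgh with rfl | rfl <;> simp [hμ.ne] at h01
  set v : Fin 2 → ℝ := if z = 0 then ![l - μ, 1] else ![-μ, 1]
  have hv : inRegion z v := by
    unfold inRegion v
    split_ifs <;> simp <;> linarith
  have hbd : (g.1 *ᵥ v) 0 * ((g.1 *ᵥ v) 0 - l * (g.1 *ᵥ v) 1) = 0 := by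
    unfold v
    split_ifs <;> simp [hgμ, Matrix.mulVec, dotProduct, Fin.sum_univ_two]
  have hout : outRegion l x (g.1 *ᵥ v) := by
    rcases hgh with rfl | rfl
    · exact hw.mulVec_outRegion hp hl hv
    · rw [Matrix.SpecialLinearGroup.coe_neg, Matrix.neg_mulVec]
      exact outRegion_neg (by rw [neg_neg]; exact hw.mulVec_outRegion hp hl hv)
  exact not_outRegion (by linarith) hbd hout

lemma one_le_sq_apply_zero_zero_of_mem (hp : 3 ≤ p) (hl : l = 2 * cos (π / p)) {g : SL2R}
    (hg : g ∈ HeckeGroup l) (hc : g.1 1 0 = 0) : 1 ≤ g.1 0 0 ^ 2 := by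
  by_contra! hlt
  have hdet : g.1 0 0 * g.1 1 1 = 1 := by
    have := g.2
    rw [Matrix.det_fin_two, hc] at this
    linarith
  have hα : g.1 0 0 ≠ 0 := left_ne_zero_of_mul_eq_one hdet
  have hconj : (g * Smat l * g⁻¹).1 =
      !![g.1 0 0 * g.1 1 1, l * g.1 0 0 ^ 2; 0, g.1 0 0 * g.1 1 1] := by
    rw [Matrix.SpecialLinearGroup.coe_mul, Matrix.SpecialLinearGroup.coe_mul,
      Matrix.SpecialLinearGroup.coe_inv, Matrix.adjugate_fin_two]
    ext i j
    fin_cases i <;> fin_cases j <;>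
      simp [Smat, Matrix.mul_apply, Fin.sum_univ_two, hc] <;> ring
  rw [hdet] at hconj
  have hl0 := heckeLambda_pos hp hl
  exact coe_ne_translation hp hl (by positivity) (by nlinarith)
    (mul_mem (mul_mem hg Smat_mem) (inv_mem hg)) hconj

lemma sq_trace_eq_four_of_mem (hp : 3 ≤ p) (hl : l = 2 * cos (π / p)) {g : SL2R}
    (hg : g ∈ HeckeGroup l) (hc : g.1 1 0 = 0) : (g.1 0 0 + g.1 1 1) ^ 2 = 4 := by
  have hdet : g.1 0 0 * g.1 1 1 = 1 := by
    have := g.2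
    rw [Matrix.det_fin_two, hc] at this
    linarith
  have hinv : (g⁻¹).1 = !![g.1 1 1, -g.1 0 1; -g.1 1 0, g.1 0 0] := by
    rw [Matrix.SpecialLinearGroup.coe_inv, Matrix.adjugate_fin_two]
  have h1 := one_le_sq_apply_zero_zero_of_mem hp hl hg hc
  have h2 := one_le_sq_apply_zero_zero_of_mem hp hl (inv_mem hg) (by simp [hinv, hc])
  simp only [hinv, Matrix.of_apply, Matrix.cons_val', Matrix.cons_val_zero, Matrix.empty_val',
    Matrix.cons_val_fin_one] at h2
  nlinarith

lemma formAct_fst_eq_conj_apply_one_zero (M N : SL2R) :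
    (formAct (M.1 1 0, M.1 1 1 - M.1 0 0, -M.1 0 1) N).1 = (N⁻¹ * M * N).1 1 0 := by
  rw [Matrix.SpecialLinearGroup.coe_mul, Matrix.SpecialLinearGroup.coe_mul,
    Matrix.SpecialLinearGroup.coe_inv, Matrix.adjugate_fin_two]
  simp only [formAct, neg_mul, mul_neg, Matrix.cons_mul, Matrix.empty_mul,
    Equiv.symm_apply_apply, Matrix.mul_apply, Matrix.of_apply, Matrix.cons_val', Matrix.vecMul,
    dotProduct, Fin.sum_univ_two, Matrix.cons_val_zero, Matrix.cons_val_one,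
    Matrix.cons_val_fin_one]
  ring

lemma fst_ne_zero_of_mem_formOrbit (hp : 3 ≤ p) (hl : l = 2 * cos (π / p))
    {Q₀ R : ℝ × ℝ × ℝ} (hQ₀ : IsHyperbolicForm l Q₀) (hR : R ∈ formOrbit l Q₀) : R.1 ≠ 0 := by
  obtain ⟨M, hM, htr, rfl⟩ := hQ₀
  obtain ⟨N, hN, rfl⟩ := hR
  rw [formAct_fst_eq_conj_apply_one_zero]
  intro hc
  have h4 := sq_trace_eq_four_of_mem hp hl (mul_mem (mul_mem (inv_mem hN) hM) hN) hc
  have htrace : (N⁻¹ * M * N).1.trace = M.1.trace := by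
    rw [Matrix.SpecialLinearGroup.coe_mul, Matrix.SpecialLinearGroup.coe_mul,
      Matrix.trace_mul_cycle, ← Matrix.SpecialLinearGroup.coe_mul,
      ← Matrix.SpecialLinearGroup.coe_mul, mul_inv_cancel, one_mul]
  rw [Matrix.trace_fin_two, Matrix.trace_fin_two] at htrace
  nlinarith

end Rigidity

section Counting

/-- The indicator of `0 < f t` telescopes around the cycle. -/
lemma card_downcrossings_eq_card_upcrossings {p : ℕ} {f : ℕ → ℝ} (hf : ∀ t ≤ p, f t ≠ 0)
    (hper : f p = f 0) :
    #{t ∈ range p | 0 < f t ∧ f (t + 1) < 0} = #{t ∈ range p | f t < 0 ∧ 0 < f (t + 1)} := by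
  have key : ∀ t ∈ range p,
      ((if 0 < f t ∧ f (t + 1) < 0 then 1 else 0 : ℤ) -
        if f t < 0 ∧ 0 < f (t + 1) then 1 else 0) =
        (if 0 < f t then 1 else 0) - if 0 < f (t + 1) then 1 else 0 := by
    intro t ht
    have ht' := mem_range.mp ht
    rcases (hf t ht'.le).lt_or_gt with h0 | h0 <;>
      rcases (hf (t + 1) ht').lt_or_gt with h1 | h1 <;>
      simp [h0, h1, h0.not_gt, h1.not_gt]
  have hdiff : (#{t ∈ range p | 0 < f t ∧ f (t + 1) < 0} : ℤ) -
      #{t ∈ range p | f t < 0 ∧ 0 < f (t + 1)} = 0 := by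
    rw [card_filter, card_filter]
    push_cast
    rw [← sum_sub_distrib, sum_congr rfl key, sum_range_sub', hper, sub_self]
  omega

lemma sum_range_sum_comp_eq_sum_card_smul {α M : Type*} [DecidableEq α] [AddCommMonoid M]
    {n : ℕ} {S T : Finset α} (σ τ : ℕ → α → α) (hτσ : ∀ t x, τ t (σ t x) = x)
    (hστ : ∀ t y, σ t (τ t y) = y) (hT : ∀ t < n, ∀ x ∈ S, σ t x ∈ T) (G : α → M) :
    ∑ t ∈ range n, ∑ x ∈ S, G (σ t x) = ∑ y ∈ T, #{t ∈ range n | τ t y ∈ S} • G y := by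
  calc ∑ t ∈ range n, ∑ x ∈ S, G (σ t x)
      = ∑ t ∈ range n, ∑ y ∈ T with τ t y ∈ S, G y := by
        refine sum_congr rfl fun t ht => sum_nbij' (σ t) (τ t) ?_ ?_ ?_ ?_ ?_
        · exact fun x hx => mem_filter.mpr ⟨hT t (mem_range.mp ht) x hx, by rwa [hτσ]⟩
        · exact fun y hy => (mem_filter.mp hy).2
        · exact fun x _ => hτσ t x
        · exact fun y _ => hστ t y
        · exact fun _ _ => rfl
    _ = ∑ y ∈ T, ∑ t ∈ range n with τ t y ∈ S, G y :=
        sum_comm' fun t y => by simp only [mem_filter]; tauto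
    _ = ∑ y ∈ T, #{t ∈ range n | τ t y ∈ S} • G y := by simp only [sum_const]

end Counting

section Relations

variable {M : Type*} [AddCommGroup M] {p : ℕ} {l : ℝ} {Q₀ : ℝ × ℝ × ℝ}
  {Splus Sminus : Finset (ℝ × ℝ × ℝ)}

lemma neg_formAct_Tmat_mem_iff
    (hSplus : ∀ Q, Q ∈ Splus ↔ Q ∈ formOrbit l Q₀ ∧ IsSimple Q)
    (hSminus : ∀ Q, Q ∈ Sminus ↔ Q ∈ formOrbit l (-Q₀) ∧ IsSimple Q) (Q : ℝ × ℝ × ℝ) :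
    -formAct Q Tmat ∈ Sminus ↔ Q ∈ Splus := by
  rw [hSminus, hSplus, neg_mem_formOrbit_neg_iff, formAct_mem_formOrbit_iff Tmat_mem]
  simp only [IsSimple, formAct_Tmat, Prod.fst_neg, Prod.snd_neg, Left.neg_pos_iff,
    Left.neg_neg_iff, and_comm]

lemma signedSum_formAct_Tmat
    (hSplus : ∀ Q, Q ∈ Splus ↔ Q ∈ formOrbit l Q₀ ∧ IsSimple Q)
    (hSminus : ∀ Q, Q ∈ Sminus ↔ Q ∈ formOrbit l (-Q₀) ∧ IsSimple Q) (G : ℝ × ℝ × ℝ → M) :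
    signedSum Splus Sminus (fun Q => G (formAct Q Tmat)) = -signedSum Splus Sminus G := by
  set φ : ℝ × ℝ × ℝ → ℝ × ℝ × ℝ := fun Q => -formAct Q Tmat
  have hφφ (Q : ℝ × ℝ × ℝ) : φ (φ Q) = Q := by simp [φ, formAct_Tmat]
  have hmem (Q : ℝ × ℝ × ℝ) : φ Q ∈ Sminus ↔ Q ∈ Splus :=
    neg_formAct_Tmat_mem_iff hSplus hSminus Q
  have hmem' (Q : ℝ × ℝ × ℝ) : φ Q ∈ Splus ↔ Q ∈ Sminus := by rw [← hmem, hφφ]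
  have hplus : ∑ Q ∈ Splus, G (formAct Q Tmat) = ∑ Q ∈ Sminus, G (-Q) :=
    sum_nbij' φ φ (fun Q => (hmem Q).2) (fun Q => (hmem' Q).2) (fun Q _ => hφφ Q)
      (fun Q _ => hφφ Q) (fun Q _ => by simp [φ])
  have hminus : ∑ Q ∈ Sminus, G (formAct (-Q) Tmat) = ∑ Q ∈ Splus, G Q :=
    sum_nbij' φ φ (fun Q => (hmem' Q).2) (fun Q => (hmem Q).2) (fun Q _ => hφφ Q)
      (fun Q _ => hφφ Q) (fun Q _ => by simp [φ, formAct_neg])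
  simp only [signedSum, hplus, hminus, neg_sub]

lemma card_filter_formAct_inv_mem_eq (hp : 3 ≤ p) (hl : l = 2 * cos (π / p))
    (hQ₀ : IsHyperbolicForm l Q₀)
    (hSplus : ∀ Q, Q ∈ Splus ↔ Q ∈ formOrbit l Q₀ ∧ IsSimple Q)
    (hSminus : ∀ Q, Q ∈ Sminus ↔ Q ∈ formOrbit l (-Q₀) ∧ IsSimple Q)
    {R : ℝ × ℝ × ℝ} (hR : R ∈ formOrbit l Q₀) :
    #{t ∈ range p | formAct R (Umat l ^ t)⁻¹ ∈ Splus} =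
      #{t ∈ range p | -formAct R (Umat l ^ t)⁻¹ ∈ Sminus} := by
  set a : ℕ → ℝ := fun t => (formAct R (Umat l ^ t)⁻¹).1
  have horb (t : ℕ) : formAct R (Umat l ^ t)⁻¹ ∈ formOrbit l Q₀ :=
    formAct_mem_formOrbit hR (inv_mem (pow_mem Umat_mem t))
  have hC (t : ℕ) : (formAct R (Umat l ^ t)⁻¹).2.2 = a (t + 1) := by
    rw [← inv_mul_cancel_right (Umat l ^ t)⁻¹ (Umat l), ← _root_.mul_inv_rev, ← pow_succ',
      formAct_mul, formAct_Umat_snd_snd]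
  have hplus (t : ℕ) : formAct R (Umat l ^ t)⁻¹ ∈ Splus ↔ 0 < a t ∧ a (t + 1) < 0 := by
    rw [hSplus, IsSimple, hC, and_iff_right (horb t)]
  have hminus (t : ℕ) : -formAct R (Umat l ^ t)⁻¹ ∈ Sminus ↔ a t < 0 ∧ 0 < a (t + 1) := by
    rw [hSminus, neg_mem_formOrbit_neg_iff, IsSimple, Prod.fst_neg, Prod.snd_neg, Prod.snd_neg,
      hC, and_iff_right (horb t), Left.neg_pos_iff, Left.neg_neg_iff]
  rw [filter_congr fun t _ => hplus t, filter_congr fun t _ => hminus t]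
  refine card_downcrossings_eq_card_upcrossings
    (fun t _ => fst_ne_zero_of_mem_formOrbit hp hl hQ₀ (horb t)) ?_
  simp only [a, Umat_pow_p hp hl, inv_neg_one, pow_zero, inv_one, formAct_one,
    formAct_of_coe_eq_neg_one R (Matrix.SpecialLinearGroup.coe_neg 1)]

lemma sum_signedSum_formAct_Umat_pow (hp : 3 ≤ p) (hl : l = 2 * cos (π / p))
    (hQ₀ : IsHyperbolicForm l Q₀)
    (hSplus : ∀ Q, Q ∈ Splus ↔ Q ∈ formOrbit l Q₀ ∧ IsSimple Q)
    (hSminus : ∀ Q, Q ∈ Sminus ↔ Q ∈ formOrbit l (-Q₀) ∧ IsSimple Q) (G : ℝ × ℝ × ℝ → M) :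
    ∑ t ∈ range p, signedSum Splus Sminus (fun Q => G (formAct Q (Umat l ^ t))) = 0 := by
  set T := (range p).biUnion fun t =>
    Splus.image (formAct · (Umat l ^ t)) ∪ Sminus.image (fun Q => formAct (-Q) (Umat l ^ t))
  have hT : ∀ R ∈ T, R ∈ formOrbit l Q₀ := by
    simp only [T, mem_biUnion, mem_union, mem_image]
    rintro R ⟨t, -, ⟨Q, hQ, rfl⟩ | ⟨Q, hQ, rfl⟩⟩
    · exact formAct_mem_formOrbit ((hSplus Q).mp hQ).1 (pow_mem Umat_mem t)
    · refine formAct_mem_formOrbit ?_ (pow_mem Umat_mem t)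
      rw [← neg_mem_formOrbit_neg_iff, neg_neg]
      exact ((hSminus Q).mp hQ).1
  simp only [signedSum, sum_sub_distrib]
  rw [sum_range_sum_comp_eq_sum_card_smul (T := T) (fun t Q => formAct Q (Umat l ^ t))
      (fun t R => formAct R (Umat l ^ t)⁻¹) (fun t Q => formAct_formAct_inv Q _)
      (fun t R => by simp only [← formAct_mul, inv_mul_cancel, formAct_one])
      (fun t ht Q hQ => mem_biUnion.mpr
        ⟨t, mem_range.mpr ht, mem_union_left _ (mem_image_of_mem _ hQ)⟩),
    sum_range_sum_comp_eq_sum_card_smul (T := T) (fun t Q => formAct (-Q) (Umat l ^ t))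
      (fun t R => -formAct R (Umat l ^ t)⁻¹) (fun t Q => by rw [formAct_formAct_inv, neg_neg])
      (fun t R => by simp only [neg_neg, ← formAct_mul, inv_mul_cancel, formAct_one])
      (fun t ht Q hQ => mem_biUnion.mpr
        ⟨t, mem_range.mpr ht, mem_union_right _ (mem_image_of_mem _ hQ)⟩),
    sub_eq_zero]
  exact sum_congr rfl fun R hR => by
    rw [card_filter_formAct_inv_mem_eq hp hl hQ₀ hSplus hSminus (hT R hR)]

end Relations

theorem rpf_of_orbit_pair_general (p : ℕ) (hp : 3 ≤ p) (k : ℕ)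
    (l : ℝ) (hl : l = 2 * Real.cos (Real.pi / p))
    (Q₀ : ℝ × ℝ × ℝ) (hQ₀ : IsHyperbolicForm l Q₀)
    (Splus Sminus : Finset (ℝ × ℝ × ℝ))
    (hSplus : ∀ Q, Q ∈ Splus ↔ Q ∈ formOrbit l Q₀ ∧ IsSimple Q)
    (hSminus : ∀ Q, Q ∈ Sminus ↔ Q ∈ formOrbit l (-Q₀) ∧ IsSimple Q)
    (q : ℂ → ℂ)
    (hq : ∀ z, q z = (∑ Q ∈ Splus, (formVal Q z) ^ (-(k : ℤ)))
        - (-1) ^ k * ∑ Q ∈ Sminus, (formVal Q z) ^ (-(k : ℤ))) :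
    (∀ z : ℂ, denom Tmat z ≠ 0 →
      (∀ Q ∈ Splus ∪ Sminus, formVal Q z ≠ 0 ∧ formVal Q (mobius Tmat z) ≠ 0) →
      q z + slash k Tmat q z = 0) ∧
    (∀ z : ℂ,
      (∀ t < p, denom ((Umat l) ^ t) z ≠ 0 ∧
        ∀ Q ∈ Splus ∪ Sminus, formVal Q (mobius ((Umat l) ^ t) z) ≠ 0) →
      ∑ t ∈ Finset.range p, slash k ((Umat l) ^ t) q z = 0) := by
  obtain rfl : q = fun w => signedSum Splus Sminus (fun Q => formVal Q w ^ (-(k : ℤ))) :=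
    funext fun w => (hq w).trans (signedSum_formVal_zpow Splus Sminus k w).symm
  refine ⟨fun z hz _ => ?_, fun z hz => ?_⟩
  · rw [slash_signedSum_formVal_zpow Splus Sminus k hz, add_comm]
    exact eq_neg_iff_add_eq_zero.mp
      (signedSum_formAct_Tmat hSplus hSminus (formVal · z ^ (-(k : ℤ))))
  · rw [sum_congr rfl fun t ht =>
      slash_signedSum_formVal_zpow Splus Sminus k (hz t (mem_range.mp ht)).1]
    exact sum_signedSum_formAct_Umat_pow hp hl hQ₀ hSplus hSminus (formVal · z ^ (-(k : ℤ)))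

/-- For a hyperbolic λ-BQF `Q₀` of positive discriminant, the function
`q(z) = Σ_{Q ∈ S₊} Q(z,1)^{-k} - (-1)^k Σ_{Q ∈ S₋} Q(z,1)^{-k}`, where `S₊`, `S₋` are the
(finite, nonempty) sets of simple forms in the orbits of `Q₀` and `-Q₀`, satisfies the two
rational period function relations of weight `2k` on `G_p`. -/
theorem rpf_of_orbit_pair (p : ℕ) (hp : 3 ≤ p) (k : ℕ) (hk : 1 ≤ k)
    (l : ℝ) (hl : l = 2 * Real.cos (Real.pi / p))
    (Q₀ : ℝ × ℝ × ℝ) (hQ₀ : IsHyperbolicForm l Q₀) (hD : 0 < disc Q₀)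
    (Splus Sminus : Finset (ℝ × ℝ × ℝ))
    (hSplus : ∀ Q, Q ∈ Splus ↔ Q ∈ formOrbit l Q₀ ∧ IsSimple Q)
    (hSminus : ∀ Q, Q ∈ Sminus ↔ Q ∈ formOrbit l (-Q₀) ∧ IsSimple Q)
    (hneP : Splus.Nonempty) (hneM : Sminus.Nonempty)
    (q : ℂ → ℂ)
    (hq : ∀ z, q z = (∑ Q ∈ Splus, (formVal Q z) ^ (-(k : ℤ)))
        - (-1) ^ k * ∑ Q ∈ Sminus, (formVal Q z) ^ (-(k : ℤ))) :
    (∀ z : ℂ, denom Tmat z ≠ 0 →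
      (∀ Q ∈ Splus ∪ Sminus, formVal Q z ≠ 0 ∧ formVal Q (mobius Tmat z) ≠ 0) →
      q z + slash k Tmat q z = 0) ∧
    (∀ z : ℂ,
      (∀ t < p, denom ((Umat l) ^ t) z ≠ 0 ∧
        ∀ Q ∈ Splus ∪ Sminus, formVal Q (mobius ((Umat l) ^ t) z) ≠ 0) →
      ∑ t ∈ Finset.range p, slash k ((Umat l) ^ t) q z = 0) :=
  rpf_of_orbit_pair_general p hp k l hl Q₀ hQ₀ Splus Sminus hSplus hSminus q hq
end
end

section
/- Fix an integer p ≥ 3, set λ = 2cos(π/p) and U = [[λ,−1],[1,0]] ∈ SL(2,ℝ). Then U^p = −I, and U^t ∉ {I, −I} for every t with 1 ≤ t ≤ p−1. Consequently the image of U in PSL(2,ℝ) has order exactly p. -/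
/-!
`U` is a rotation by `θ = π/p` written in a skew basis: the powers of
`U = [[2cos θ, -1], [1, 0]]` satisfy the recurrence `Uⁿ⁺¹ = 2cos θ · Uⁿ - Uⁿ⁻¹`,
as does `sin (nθ)`, whence
`sin θ · Uⁿ = [[sin((n+1)θ), -sin(nθ)], [sin(nθ), -sin((n-1)θ)]]`.
At `n = p` this is `-sin θ · I`, while for `0 < t < p` the lower-left entry `sin(tθ)` is
nonzero, so `Uᵗ` is not scalar and hence not central in `SL(2,ℝ)`.
-/

open Matrix

open scoped MatrixGroups

noncomputable section

lemma Matrix.SpecialLinearGroup.apply_eq_zero_of_mem_center {n R : Type*} [Fintype n]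
    [DecidableEq n] [CommRing R] {A : SpecialLinearGroup n R}
    (hA : A ∈ Subgroup.center (SpecialLinearGroup n R)) {i j : n} (hij : i ≠ j) :
    A i j = 0 := by
  rw [← Matrix.SpecialLinearGroup.scalar_eq_self_of_mem_center hA i]
  simp [hij]

lemma Umat_coe (l : ℝ) : (Umat l : Matrix (Fin 2) (Fin 2) ℝ) = !![l, -1; 1, 0] := by
  rw [Umat, Matrix.SpecialLinearGroup.coe_mul]
  simp [Smat, Tmat]

lemma Real.sin_add_mul_add_sin_sub_mul (a θ : ℝ) :
    Real.sin ((a + 1) * θ) + Real.sin ((a - 1) * θ) = 2 * Real.cos θ * Real.sin (a * θ) := by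
  rw [add_mul, sub_mul, one_mul, Real.sin_add, Real.sin_sub]
  ring

/-- The factor `sin θ` clears the denominator, so the identity holds for every `θ`. -/
lemma sin_smul_Umat_pow (θ : ℝ) (n : ℕ) :
    Real.sin θ • ((Umat (2 * Real.cos θ) ^ n : SL2R) : Matrix (Fin 2) (Fin 2) ℝ) =
      !![Real.sin ((n + 1) * θ), -Real.sin (n * θ);
         Real.sin (n * θ), -Real.sin ((n - 1) * θ)] := by
  induction n with
  | zero =>
    ext i j
    fin_cases i <;> fin_cases j <;> simp
  | succ n ih =>
    rw [pow_succ, Matrix.SpecialLinearGroup.coe_mul, ← smul_mul_assoc, ih, Umat_coe, mul_fin_two]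
    have hn := Real.sin_add_mul_add_sin_sub_mul (n : ℝ) θ
    have hn1 := Real.sin_add_mul_add_sin_sub_mul ((n : ℝ) + 1) θ
    simp only [add_sub_cancel_right] at hn1
    push_cast
    ext i j
    fin_cases i <;> fin_cases j <;> simp <;> linarith

lemma Umat_pow_apply_one_zero_ne_zero {p t : ℕ} (ht : 0 < t) (htp : t < p) :
    (Umat (2 * Real.cos (Real.pi / p)) ^ t) 1 0 ≠ 0 := by
  have hp : (0 : ℝ) < p := by exact_mod_cast ht.trans htp
  have hentry : Real.sin (Real.pi / p) * (Umat (2 * Real.cos (Real.pi / p)) ^ t) 1 0 =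
      Real.sin (t * (Real.pi / p)) := by
    simpa using congrFun₂ (sin_smul_Umat_pow (Real.pi / p) t) 1 0
  have hsin : 0 < Real.sin (t * (Real.pi / p)) := by
    apply Real.sin_pos_of_pos_of_lt_pi (by positivity)
    rw [mul_div_assoc', div_lt_iff₀ hp, mul_comm Real.pi]
    exact mul_lt_mul_of_pos_right (by exact_mod_cast htp) Real.pi_pos
  exact right_ne_zero_of_mul (hentry ▸ hsin.ne')

lemma Umat_pow_eq_neg_one {p : ℕ} (hp : 2 ≤ p) :
    ((Umat (2 * Real.cos (Real.pi / p)) ^ p : SL2R) : Matrix (Fin 2) (Fin 2) ℝ) = -1 := by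
  have hp0 : (p : ℝ) ≠ 0 := by positivity
  have hsin : Real.sin (Real.pi / p) ≠ 0 := by
    refine (Real.sin_pos_of_pos_of_lt_pi (by positivity) ?_).ne'
    exact div_lt_self Real.pi_pos (by exact_mod_cast hp)
  refine smul_right_injective (Matrix (Fin 2) (Fin 2) ℝ) hsin
    (?_ : Real.sin _ • _ = Real.sin _ • _)
  rw [sin_smul_Umat_pow, add_mul, sub_mul, one_mul, mul_div_cancel₀ _ hp0, Real.sin_pi,
    add_comm, Real.sin_add_pi, Real.sin_pi_sub]
  ext i j
  fin_cases i <;> fin_cases j <;> simp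

/-- With `λ = 2cos(π/p)`, `U^p = -I`, `U^t ∉ {I, -I}` for
`1 ≤ t ≤ p-1`, and the image of `U` in `PSL(2,ℝ)` has order exactly `p`. -/
theorem Umat_order (p : ℕ) (hp : 3 ≤ p) (l : ℝ) (hl : l = 2 * Real.cos (Real.pi / p)) :
    ((Umat l) ^ p).1 = -(1 : Matrix (Fin 2) (Fin 2) ℝ) ∧
    (∀ t : ℕ, 1 ≤ t → t ≤ p - 1 →
      ((Umat l) ^ t).1 ≠ (1 : Matrix (Fin 2) (Fin 2) ℝ) ∧
      ((Umat l) ^ t).1 ≠ -(1 : Matrix (Fin 2) (Fin 2) ℝ)) ∧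
    orderOf ((QuotientGroup.mk (Umat l)) : Matrix.ProjectiveSpecialLinearGroup (Fin 2) ℝ)
      = p := by
  subst hl
  have hpow := Umat_pow_eq_neg_one (show 2 ≤ p by omega)
  refine ⟨hpow, fun t ht1 ht2 => ⟨fun h => ?_, fun h => ?_⟩, ?_⟩
  · exact Umat_pow_apply_one_zero_ne_zero (p := p) ht1 (by omega) (by simp [h])
  · exact Umat_pow_apply_one_zero_ne_zero (p := p) ht1 (by omega) (by simp [h])
  rw [orderOf_eq_iff (by omega)]
  refine ⟨?_, fun m hmp hm h => ?_⟩
  · rw [← QuotientGroup.mk_pow, QuotientGroup.eq_one_iff,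
      Matrix.SpecialLinearGroup.mem_center_iff]
    exact ⟨-1, by norm_num, by rw [hpow, map_neg, map_one]⟩
  · rw [← QuotientGroup.mk_pow, QuotientGroup.eq_one_iff] at h
    exact Umat_pow_apply_one_zero_ne_zero hm hmp
      (Matrix.SpecialLinearGroup.apply_eq_zero_of_mem_center h (by decide))
end
end
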